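/- Let φ(y₁,y₂) := max(e^{−y₁} + y₂, y₂²) + (1/2)(y₂ − 2)² for (y₁,y₂) ∈ ℝ². Then inf_{(y₁,y₂) ∈ ℝ²} φ(y₁,y₂) = 3/2, yet φ(y₁,y₂) > 3/2 for every (y₁,y₂) ∈ ℝ²; hence the infimum is finite but not attained, so the first ADMM subproblem for the concrete problem (with σ = 1 and initial point x⁰ = 0, z⁰ = 0) has no solution. -/

import Mathlib

/-!
On the line `y₂ = 1` the second branch of the max is inactive and `φ(y₁, 1) = e^{-y₁} + 3/2`,
which tends to `3/2` as `y₁ → ∞`. Conversely `φ(y₁, y₂) ≥ e^{-y₁} + y₂ + (y₂ - 2)²/2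
= e^{-y₁} + 3/2 + (y₂ - 1)²/2 > 3/2`, so `3/2` is approached but never reached.
-/

/-- The objective of the first ADMM subproblem for the concrete problem with `σ = 1`,
`x⁰ = 0`, `z⁰ = 0`:  `φ(y₁, y₂) = max(e^{-y₁} + y₂, y₂²) + (y₂ - 2)²/2`. -/
noncomputable def phiCon (y₁ y₂ : ℝ) : ℝ :=
  max (Real.exp (-y₁) + y₂) (y₂ ^ 2) + (y₂ - 2) ^ 2 / 2

open Filter Real

lemma exp_neg_add_three_halves_le_phiCon (y₁ y₂ : ℝ) : exp (-y₁) + 3 / 2 ≤ phiCon y₁ y₂ :=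
  calc exp (-y₁) + 3 / 2 ≤ exp (-y₁) + y₂ + (y₂ - 2) ^ 2 / 2 := by nlinarith [sq_nonneg (y₂ - 1)]
    _ ≤ phiCon y₁ y₂ := by unfold phiCon; gcongr; exact le_max_left _ _

lemma three_halves_lt_phiCon (y₁ y₂ : ℝ) : 3 / 2 < phiCon y₁ y₂ :=
  (lt_add_of_pos_left _ (exp_pos _)).trans_le (exp_neg_add_three_halves_le_phiCon y₁ y₂)

lemma phiCon_one (y₁ : ℝ) : phiCon y₁ 1 = exp (-y₁) + 3 / 2 := by
  unfold phiCon
  rw [max_eq_left (by linarith [exp_pos (-y₁)])]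
  ring

lemma exists_phiCon_lt {c : ℝ} (hc : 3 / 2 < c) : ∃ y₁, phiCon y₁ 1 < c := by
  obtain ⟨y₁, hy₁⟩ := (tendsto_exp_neg_atTop_nhds_zero.eventually_lt_const
    (sub_pos.mpr hc)).exists
  exact ⟨y₁, by rw [phiCon_one]; linarith⟩

/-- **The first ADMM subproblem has no solution.**  The infimum of `φ` over `ℝ²` equals
`3/2`, yet `φ(y₁, y₂) > 3/2` everywhere; hence the infimum is finite but not attained and
the first ADMM subproblem has no solution. -/
theorem stmt_12 :
    (⨅ p : ℝ × ℝ, ((phiCon p.1 p.2 : ℝ) : EReal)) = ((3 / 2 : ℝ) : EReal) ∧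
    (∀ y₁ y₂ : ℝ, 3 / 2 < phiCon y₁ y₂) ∧
    ¬∃ p : ℝ × ℝ, ∀ q : ℝ × ℝ, phiCon p.1 p.2 ≤ phiCon q.1 q.2 := by
  refine ⟨?_, three_halves_lt_phiCon, ?_⟩
  · refine iInf_eq_of_forall_ge_of_forall_gt_exists_lt
      (fun p ↦ EReal.coe_le_coe_iff.mpr (three_halves_lt_phiCon p.1 p.2).le) fun w hw ↦ ?_
    obtain ⟨c, hc, hcw⟩ := EReal.lt_iff_exists_real_btwn.mp hw
    obtain ⟨y₁, hy₁⟩ := exists_phiCon_lt (EReal.coe_lt_coe_iff.mp hc)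
    exact ⟨(y₁, 1), (EReal.coe_lt_coe_iff.mpr hy₁).trans hcw⟩
  · rintro ⟨p, hp⟩
    obtain ⟨y₁, hy₁⟩ := exists_phiCon_lt (three_halves_lt_phiCon p.1 p.2)
    exact (hp (y₁, 1)).not_gt hy₁
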